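/- arXiv:2002.05284 — 3 statements merged into one kernel-verified Lean document; each statement's English description precedes it below -/
import Mathlib

section
/- Let p be an odd prime and n ≥ 1. For nonzero α, β, γ ∈ 𝔽_p^n with α + β + γ = 0, the identity u_α·t_β + u_α·t_γ − u_β·t_γ − u_γ·t_β = 0 holds in the exterior algebra E. -/
open MvPolynomial

set_option synthInstance.maxHeartbeats 1000000
set_option maxHeartbeats 1000000

noncomputable section

/-- `K`, the field of fractions of `𝔽_p[x_1, …, x_n]`. -/
abbrev Kf (p n : ℕ) : Type _ := FractionRing (MvPolynomial (Fin n) (ZMod p))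

/-- The constant `a ∈ 𝔽_p` regarded as an element of `K`. -/
def cK (p n : ℕ) (a : ZMod p) : Kf p n :=
  algebraMap (MvPolynomial (Fin n) (ZMod p)) (Kf p n) (C a)

/-- The variable `x_i` regarded as an element of `K`. -/
def xK (p n : ℕ) (i : Fin n) : Kf p n :=
  algebraMap (MvPolynomial (Fin n) (ZMod p)) (Kf p n) (X i)

/-- The linear form `z_α = Σ_i α_i x_i ∈ K`. -/
def zf (p n : ℕ) (α : Fin n → ZMod p) : Kf p n := ∑ i, cK p n (α i) * xK p n i

/-- `t_α = z_α⁻¹ ∈ K`. -/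
def tf (p n : ℕ) [Fact (Nat.Prime p)] (α : Fin n → ZMod p) : Kf p n := (zf p n α)⁻¹

/-- `E`, the exterior algebra over `K` on an `n`-dimensional `K`-vector space
with basis `dx_1, …, dx_n`. -/
abbrev Ef (p n : ℕ) : Type _ := ExteriorAlgebra (Kf p n) (Fin n → Kf p n)

/-- `dx_i ∈ E`. -/
def dxE (p n : ℕ) (i : Fin n) : Ef p n :=
  ExteriorAlgebra.ι (Kf p n) (Pi.single i 1)

/-- `dz_α = Σ_i α_i dx_i ∈ E`. -/
def dzf (p n : ℕ) (α : Fin n → ZMod p) : Ef p n :=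
  ∑ i, algebraMap (Kf p n) (Ef p n) (cK p n (α i)) * dxE p n i

/-- `t_α ∈ K ⊆ E`. -/
def tE (p n : ℕ) [Fact (Nat.Prime p)] (α : Fin n → ZMod p) : Ef p n :=
  algebraMap (Kf p n) (Ef p n) (tf p n α)

/-- `u_α = t_α · dz_α ∈ E`. -/
def uf (p n : ℕ) [Fact (Nat.Prime p)] (α : Fin n → ZMod p) : Ef p n :=
  tE p n α * dzf p n α

/-! The identity holds because `dz` is additive, so `dz_β + dz_γ = -dz_α`, which collapses the
left-hand side to `(t_α t_β + t_α t_γ + t_β t_γ) • dz_α`; and that coefficient equals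
`t_α t_β t_γ (z_α + z_β + z_γ) = 0`, since `z` is additive and injective on `𝔽_p^n`. -/

theorem inv_mul_inv_add_inv_mul_inv_add_inv_mul_inv_of_add_add_eq_zero {F : Type*} [Field F]
    {a b c : F} (ha : a ≠ 0) (hb : b ≠ 0) (hc : c ≠ 0) (h : a + b + c = 0) :
    a⁻¹ * b⁻¹ + a⁻¹ * c⁻¹ + b⁻¹ * c⁻¹ = 0 := by
  field_simp
  linear_combination h

theorem algebraMap_mul_mul_algebraMap {R A : Type*} [CommSemiring R] [Semiring A] [Algebra R A]
    (a b : R) (x : A) : algebraMap R A a * x * algebraMap R A b = (a * b) • x := by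
  rw [mul_assoc, ← Algebra.commutes b x, ← mul_assoc, ← map_mul, ← Algebra.smul_def]

theorem smul_add_smul_sub_smul_sub_smul_eq_zero {R M : Type*} [CommRing R] [AddCommGroup M]
    [Module R M] {a b c : R} {x y z : M} (hxyz : x + y + z = 0)
    (habc : a * b + a * c + b * c = 0) :
    (a * b) • x + (a * c) • x - (b * c) • y - (c * b) • z = 0 := by
  rw [eq_neg_of_add_eq_zero_right hxyz, mul_comm c b, smul_neg, smul_add]
  calc (a * b) • x + (a * c) • x - (b * c) • y - -((b * c) • x + (b * c) • y)
      = (a * b + a * c + b * c) • x := by rw [add_smul, add_smul]; abel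
    _ = 0 := by rw [habc, zero_smul]

section LinearForms

variable (p n : ℕ)

theorem zf_eq_algebraMap (α : Fin n → ZMod p) :
    zf p n α = algebraMap (MvPolynomial (Fin n) (ZMod p)) (Kf p n) (∑ i, C (α i) * X i) := by
  simp only [zf, cK, xK, map_sum, map_mul]

theorem zf_ne_zero [Fact (Nat.Prime p)] {α : Fin n → ZMod p} (hα : α ≠ 0) : zf p n α ≠ 0 := by
  rw [zf_eq_algebraMap, ne_eq, IsFractionRing.to_map_eq_zero_iff]
  refine fun h => hα (funext fun j => ?_)
  simpa [MvPolynomial.eval_sum, Pi.single_apply] using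
    congrArg (MvPolynomial.eval (Pi.single j 1 : Fin n → ZMod p)) h

theorem zf_add (α β : Fin n → ZMod p) : zf p n (α + β) = zf p n α + zf p n β := by
  simp [zf, cK, add_mul, Finset.sum_add_distrib]

theorem zf_zero : zf p n 0 = 0 := by
  simp [zf, cK]

theorem dzf_add (α β : Fin n → ZMod p) : dzf p n (α + β) = dzf p n α + dzf p n β := by
  simp [dzf, cK, add_mul, Finset.sum_add_distrib]

theorem dzf_zero : dzf p n 0 = 0 := by
  simp [dzf, cK]

end LinearForms

theorem stmt1_general (p n : ℕ) [Fact (Nat.Prime p)]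
    (α β γ : Fin n → ZMod p) (hα : α ≠ 0) (hβ : β ≠ 0) (hγ : γ ≠ 0)
    (hsum : α + β + γ = 0) :
    uf p n α * tE p n β + uf p n α * tE p n γ
      - uf p n β * tE p n γ - uf p n γ * tE p n β = 0 := by
  have hz : zf p n α + zf p n β + zf p n γ = 0 := by
    rw [← zf_add, ← zf_add, hsum, zf_zero]
  have hdz : dzf p n α + dzf p n β + dzf p n γ = 0 := by
    rw [← dzf_add, ← dzf_add, hsum, dzf_zero]
  have ht : tf p n α * tf p n β + tf p n α * tf p n γ + tf p n β * tf p n γ = 0 :=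
    inv_mul_inv_add_inv_mul_inv_add_inv_mul_inv_of_add_add_eq_zero
      (zf_ne_zero p n hα) (zf_ne_zero p n hβ) (zf_ne_zero p n hγ) hz
  simp only [uf, tE, algebraMap_mul_mul_algebraMap]
  exact smul_add_smul_sub_smul_sub_smul_eq_zero hdz ht

/-- For an odd prime `p`, `n ≥ 1`, and nonzero `α, β, γ ∈ 𝔽_p^n` with `α + β + γ = 0`,
the identity `u_α·t_β + u_α·t_γ − u_β·t_γ − u_γ·t_β = 0` holds in `E`. -/
theorem stmt1 (p n : ℕ) [Fact (Nat.Prime p)] (hodd : Odd p) (hn : 1 ≤ n)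
    (α β γ : Fin n → ZMod p) (hα : α ≠ 0) (hβ : β ≠ 0) (hγ : γ ≠ 0)
    (hsum : α + β + γ = 0) :
    uf p n α * tE p n β + uf p n α * tE p n γ
      - uf p n β * tE p n γ - uf p n γ * tE p n β = 0 :=
  stmt1_general p n α β γ hα hβ hγ hsum
end
end

section
/- Let p be a prime and n ≥ 1. A finite subset S of 𝔽_p^n∖{0} belongs to F_n if and only if every v ∈ S has its last nonzero coordinate equal to 1 and the positions of the last nonzero coordinates of distinct elements of S are pairwise distinct (i.e., S is in not-necessarily-reduced row echelon form with respect to the reversed order of coordinates). Moreover, every S ∈ F_n is 𝔽_p-linearly independent. -/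
/-!
Both echelon conditions are preserved by the embedding `v ↦ (v, 0)`, which shifts every pivot
into the first `n` positions, and adding a vector `(x, 1)` adds the fresh pivot `n + 1`.
Conversely, in an echelon subset of `𝔽_p^{n+1}` at most one vector has a nonzero last
coordinate, and that vector has the form `(x, 1)`; so induction on `n` identifies `F_n` with the
echelon sets. Linear independence is triangularity: in a vanishing combination, read off the
coordinate at the largest pivot among the vectors with nonzero coefficient.
-/

noncomputable section

/-- The collection `F_n` of finite subsets of `𝔽_p^n ∖ {0}`, defined recursively by
`F_0 = {∅}` (so that `F_1 = {∅, {(1)}}`) and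
`F_n = F_{n−1} ∪ {S ∪ {x} : S ∈ F_{n−1}, x ∈ 𝔽_p^{n−1}×{1}}`, where `F_{n−1}` is regarded
inside `𝔽_p^n` via the embedding `𝔽_p^{n−1}×{0}`. -/
def Fn (p : ℕ) : (n : ℕ) → Set (Finset (Fin n → ZMod p))
  | 0 => {∅}
  | n + 1 =>
      (fun S : Finset (Fin n → ZMod p) =>
          S.image fun v => Fin.snoc v (0 : ZMod p)) '' Fn p n ∪
        {T | ∃ S ∈ Fn p n, ∃ x : Fin n → ZMod p,
          T = (S.image fun v => Fin.snoc v (0 : ZMod p)) ∪ {Fin.snoc x (1 : ZMod p)}}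

/-- The position `j = max {i : v_i ≠ 0}` of the last nonzero coordinate of `v`
(`⊥` if `v = 0`). -/
def piv (p : ℕ) {n : ℕ} (v : Fin n → ZMod p) : WithBot (Fin n) :=
  (Finset.univ.filter fun i => v i ≠ 0).max

section Echelon

variable {p n : ℕ}

theorem le_piv_of_apply_ne_zero {v : Fin n → ZMod p} {i : Fin n} (h : v i ≠ 0) :
    (i : WithBot (Fin n)) ≤ piv p v :=
  Finset.le_max (by simpa using h)

theorem apply_eq_zero_of_piv_lt {v : Fin n → ZMod p} {i : Fin n} (h : piv p v < i) : v i = 0 :=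
  not_not.mp fun hi => (le_piv_of_apply_ne_zero hi).not_gt h

theorem piv_eq_coe_iff {v : Fin n → ZMod p} {j : Fin n} :
    piv p v = j ↔ v j ≠ 0 ∧ ∀ i, j < i → v i = 0 := by
  refine ⟨fun h => ⟨by simpa using Finset.mem_of_max h, fun i hi =>
    apply_eq_zero_of_piv_lt (h ▸ WithBot.coe_lt_coe.mpr hi)⟩, fun ⟨hj, hgt⟩ => ?_⟩
  refine le_antisymm (Finset.max_le fun i hi => ?_) (le_piv_of_apply_ne_zero hj)
  exact WithBot.coe_le_coe.mpr (not_lt.mp fun hlt => (Finset.mem_filter.mp hi).2 (hgt i hlt))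

theorem piv_snoc_zero (v : Fin n → ZMod p) :
    piv p (Fin.snoc v 0 : Fin (n + 1) → ZMod p) = (piv p v).map Fin.castSucc := by
  cases h : piv p v with
  | bot =>
    refine Finset.max_eq_bot.mpr (Finset.filter_eq_empty_iff.mpr fun i _ => not_not.mpr ?_)
    refine Fin.lastCases (by simp) (fun i => ?_) i
    rw [Fin.snoc_castSucc]
    exact apply_eq_zero_of_piv_lt (h ▸ WithBot.bot_lt_coe i)
  | coe j =>
    obtain ⟨hj, hgt⟩ := piv_eq_coe_iff.mp h
    refine piv_eq_coe_iff.mpr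
      ⟨by simpa using hj, fun i => Fin.lastCases (by simp) (fun i hi => ?_) i⟩
    rw [Fin.snoc_castSucc]
    exact hgt i (Fin.castSucc_lt_castSucc_iff.mp hi)

theorem piv_snoc_of_ne_zero (x : Fin n → ZMod p) {c : ZMod p} (hc : c ≠ 0) :
    piv p (Fin.snoc x c : Fin (n + 1) → ZMod p) = Fin.last n :=
  piv_eq_coe_iff.mpr ⟨by simpa using hc, fun i hi => absurd (Fin.le_last i) hi.not_ge⟩

def IsEchelon (S : Finset (Fin n → ZMod p)) : Prop :=
  (∀ v ∈ S, ∃ j : Fin n, piv p v = j ∧ v j = 1) ∧ Set.InjOn (piv p) (S : Set (Fin n → ZMod p))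

theorem IsEchelon.mono {S T : Finset (Fin n → ZMod p)} (hT : IsEchelon T) (hST : S ⊆ T) :
    IsEchelon S :=
  ⟨fun v hv => hT.1 v (hST hv), hT.2.mono (Finset.coe_subset.mpr hST)⟩

theorem piv_snoc_zero_ne_last (v : Fin n → ZMod p) :
    piv p (Fin.snoc v 0 : Fin (n + 1) → ZMod p) ≠ Fin.last n :=
  fun h => (piv_eq_coe_iff.mp h).1 (Fin.snoc_last _ _)

theorem isEchelon_image_snoc_zero_iff {S : Finset (Fin n → ZMod p)} :
    IsEchelon (S.image fun v => (Fin.snoc v 0 : Fin (n + 1) → ZMod p)) ↔ IsEchelon S := by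
  have hpiv : piv p ∘ (fun v => (Fin.snoc v 0 : Fin (n + 1) → ZMod p)) =
      WithBot.map Fin.castSucc ∘ piv p := funext piv_snoc_zero
  have hinj : Set.InjOn (fun v => (Fin.snoc v 0 : Fin (n + 1) → ZMod p)) (S : Set _) :=
    fun v _ w _ h => (Fin.snoc_injective2 h).1
  have hmap : Function.Injective (WithBot.map (Fin.castSucc : Fin n → Fin (n + 1))) :=
    Option.map_injective (Fin.castSucc_injective n)
  rw [IsEchelon, IsEchelon, Finset.forall_mem_image, Finset.coe_image, ← hinj.comp_iff, hpiv]
  refine and_congr (forall₂_congr fun v _ => ?_) ⟨Set.InjOn.of_comp, hmap.comp_injOn⟩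
  simp only [Fin.exists_fin_succ', piv_snoc_zero_ne_last, false_and, or_false]
  simp only [piv_snoc_zero, Fin.snoc_castSucc, ← WithBot.map_coe, hmap.eq_iff]

theorem IsEchelon.image_snoc_zero_union [Nontrivial (ZMod p)] {S : Finset (Fin n → ZMod p)}
    (hS : IsEchelon S) (x : Fin n → ZMod p) :
    IsEchelon ((S.image fun v => (Fin.snoc v 0 : Fin (n + 1) → ZMod p)) ∪ {Fin.snoc x 1}) := by
  obtain ⟨hpivots, hinj⟩ := isEchelon_image_snoc_zero_iff.mpr hS
  have hx := piv_snoc_of_ne_zero x (one_ne_zero (α := ZMod p))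
  have hnew : ∀ w ∈ (S.image fun v => (Fin.snoc v 0 : Fin (n + 1) → ZMod p)),
      piv p w ≠ piv p (Fin.snoc x 1 : Fin (n + 1) → ZMod p) := by
    simp only [Finset.forall_mem_image, hx]
    exact fun v _ => piv_snoc_zero_ne_last v
  refine ⟨Finset.forall_mem_union.mpr ⟨hpivots, by simp [hx]⟩, ?_⟩
  rw [Finset.coe_union, Finset.coe_singleton, Set.injOn_union (Set.disjoint_singleton_right.mpr
    fun h => hnew _ h rfl)]
  exact ⟨hinj, Set.injOn_singleton _ _, fun w hw _ hy => hy ▸ hnew w hw⟩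

theorem IsEchelon.piv_eq_last {T : Finset (Fin (n + 1) → ZMod p)} (hT : IsEchelon T)
    {v : Fin (n + 1) → ZMod p} (hv : v ∈ T) (hlast : v (Fin.last n) ≠ 0) :
    piv p v = Fin.last n ∧ v (Fin.last n) = 1 := by
  obtain ⟨j, hj, hj1⟩ := hT.1 v hv
  obtain rfl : j = Fin.last n := (Fin.le_last j).eq_or_lt.resolve_right
    fun hlt => hlast ((piv_eq_coe_iff.mp hj).2 _ hlt)
  exact ⟨hj, hj1⟩

theorem isEchelon_succ_iff [Nontrivial (ZMod p)] {T : Finset (Fin (n + 1) → ZMod p)} :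
    IsEchelon T ↔ ∃ S : Finset (Fin n → ZMod p), IsEchelon S ∧
      (S.image (fun v => Fin.snoc v 0) = T ∨
        ∃ x, T = S.image (fun v => Fin.snoc v 0) ∪ {Fin.snoc x 1}) := by
  refine ⟨fun hT => ?_, ?_⟩
  · set T₀ := T.filter fun v => v (Fin.last n) = 0
    have hT₀ :
        (T₀.image Fin.init).image (fun v => (Fin.snoc v 0 : Fin (n + 1) → ZMod p)) = T₀ := by
      rw [Finset.image_image]
      refine (Finset.image_congr fun v hv => ?_).trans Finset.image_id
      rw [Function.comp_apply, ← (Finset.mem_filter.mp hv).2, Fin.snoc_init_self, id]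
    refine ⟨T₀.image Fin.init, isEchelon_image_snoc_zero_iff.mp
      (by rw [hT₀]; exact hT.mono (Finset.filter_subset _ _)), ?_⟩
    rw [hT₀]
    by_cases h : ∃ v₀ ∈ T, v₀ (Fin.last n) ≠ 0
    · obtain ⟨v₀, hv₀, hlast⟩ := h
      obtain ⟨hpiv₀, h1⟩ := hT.piv_eq_last hv₀ hlast
      have hrest : T.filter (fun v => ¬ v (Fin.last n) = 0) = {v₀} := by
        refine Finset.eq_singleton_iff_unique_mem.mpr
          ⟨Finset.mem_filter.mpr ⟨hv₀, hlast⟩, fun w hw => ?_⟩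
        obtain ⟨hwT, hwlast⟩ := Finset.mem_filter.mp hw
        exact hT.2 hwT hv₀ ((hT.piv_eq_last hwT hwlast).1.trans hpiv₀.symm)
      refine Or.inr ⟨Fin.init v₀, ?_⟩
      rw [← h1, Fin.snoc_init_self, ← hrest, Finset.filter_union_filter_not_eq]
    · push Not at h
      exact Or.inl (Finset.filter_true_of_mem h)
  · rintro ⟨S, hS, rfl | ⟨x, rfl⟩⟩
    · exact isEchelon_image_snoc_zero_iff.mpr hS
    · exact hS.image_snoc_zero_union x

theorem mem_Fn_iff [Nontrivial (ZMod p)] {S : Finset (Fin n → ZMod p)} :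
    S ∈ Fn p n ↔ IsEchelon S := by
  induction n with
  | zero => simp [Fn, IsEchelon, Finset.eq_empty_iff_forall_notMem, Unique.forall_iff]
  | succ n ih =>
    simp only [Fn, Set.mem_union, Set.mem_image, Set.mem_ofPred_eq, ih, isEchelon_succ_iff,
      and_or_left, exists_or]

theorem IsEchelon.linearIndepOn {S : Finset (Fin n → ZMod p)} (hS : IsEchelon S) :
    LinearIndepOn (ZMod p) id (S : Set (Fin n → ZMod p)) := by
  refine linearIndepOn_finset_iff.mpr fun g hg => ?_
  by_contra! h
  obtain ⟨v₀, hv₀, hmax⟩ := (S.filter (g · ≠ 0)).exists_max_image (piv p)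
    (by obtain ⟨v, hv, hgv⟩ := h; exact ⟨v, Finset.mem_filter.mpr ⟨hv, hgv⟩⟩)
  rw [Finset.mem_filter] at hv₀
  obtain ⟨j, hj, hj1⟩ := hS.1 v₀ hv₀.1
  have hcoord : ∑ v ∈ S, g v * v j = g v₀ := by
    rw [Finset.sum_eq_single_of_mem v₀ hv₀.1 fun v hv hne => ?_, hj1, mul_one]
    by_cases hgv : g v = 0
    · rw [hgv, zero_mul]
    have hlt : piv p v < j := lt_of_le_of_ne (hj ▸ hmax v (Finset.mem_filter.mpr ⟨hv, hgv⟩))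
      (hj ▸ fun h => hne (hS.2 hv hv₀.1 h))
    rw [apply_eq_zero_of_piv_lt hlt, mul_zero]
  have := congrFun hg j
  simp only [Finset.sum_apply, Pi.smul_apply, id, smul_eq_mul, Pi.zero_apply] at this
  exact hv₀.2 (hcoord ▸ this)

end Echelon

theorem stmt7_general (p n : ℕ) (hp : Nat.Prime p)
    (S : Finset (Fin n → ZMod p)) :
    (S ∈ Fn p n ↔
      (∀ v ∈ S, ∃ j : Fin n, piv p v = (j : WithBot (Fin n)) ∧ v j = 1) ∧
        Set.InjOn (piv p) (S : Set (Fin n → ZMod p))) ∧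
    (S ∈ Fn p n →
      LinearIndependent (ZMod p)
        (fun v : ↥(S : Set (Fin n → ZMod p)) => (v : Fin n → ZMod p))) := by
  have : Fact p.Prime := ⟨hp⟩
  exact ⟨mem_Fn_iff, fun hS => (mem_Fn_iff.mp hS).linearIndepOn⟩

/-- A finite subset `S` of `𝔽_p^n ∖ {0}` belongs to `F_n` if and only if every `v ∈ S` has
its last nonzero coordinate equal to `1` and the positions of the last nonzero coordinates
of distinct elements of `S` are pairwise distinct (i.e. `S` is in not-necessarily-reduced
row echelon form with respect to the reversed order of coordinates). Moreover, every
`S ∈ F_n` is `𝔽_p`-linearly independent. -/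
theorem stmt7 (p n : ℕ) (hp : Nat.Prime p) (hn : 1 ≤ n)
    (S : Finset (Fin n → ZMod p)) :
    (S ∈ Fn p n ↔
      (∀ v ∈ S, ∃ j : Fin n, piv p v = (j : WithBot (Fin n)) ∧ v j = 1) ∧
        Set.InjOn (piv p) (S : Set (Fin n → ZMod p))) ∧
    (S ∈ Fn p n →
      LinearIndependent (ZMod p)
        (fun v : ↥(S : Set (Fin n → ZMod p)) => (v : Fin n → ZMod p))) :=
  stmt7_general p n hp S

end
end

section
/- Let p be a prime and n ≥ 1. For every 0 ≤ k ≤ n, the number of sets S ∈ F_n with |S| = k equals the k-th elementary symmetric polynomial evaluated at (1, p, p^2, …, p^{n−1}); equivalently, Σ_{S ∈ F_n} y^{|S|} = Π_{i=1}^{n} (1 + p^{i−1} y) as polynomials in y with integer coefficients. -/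
/-! Every set in `F_{n+1}` is either a copy `S × {0}` of a set `S ∈ F_n`, or such a copy together
with one of the `p^n` points `(x, 1)`, and `(S, x)` is recovered from the result by reading off
the last coordinate. Hence the generating polynomial of `F_{n+1}` by cardinality is
`(1 + p^n y)` times that of `F_n`, and the coefficient of `y^k` in `∏ (1 + p^i y)` is the
`k`-th elementary symmetric function of the `p^i`. -/

noncomputable section

open Finset Polynomial

section SnocImage

variable {α : Type*} [DecidableEq α] {n : ℕ}

def snocImage (c : α) (S : Finset (Fin n → α)) : Finset (Fin (n + 1) → α) :=
  S.image fun v => Fin.snoc v c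

theorem card_snocImage (c : α) (S : Finset (Fin n → α)) : #(snocImage c S) = #S :=
  card_image_of_injective S (Fin.snoc_left_injective (α := fun _ => α) c)

theorem snocImage_injective (c : α) : Function.Injective (snocImage (n := n) c) :=
  image_injective (Fin.snoc_left_injective (α := fun _ => α) c)

theorem snoc_mem_snocImage {a c : α} {S : Finset (Fin n → α)} {v : Fin n → α} :
    Fin.snoc v a ∈ snocImage c S ↔ v ∈ S ∧ a = c := by
  simp only [snocImage, mem_image, Fin.snoc_inj]
  grind

theorem snoc_mem_snocImage_union_singleton {a c d : α} {S : Finset (Fin n → α)}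
    {v x : Fin n → α} :
    Fin.snoc v a ∈ snocImage c S ∪ {Fin.snoc x d} ↔ v ∈ S ∧ a = c ∨ v = x ∧ a = d := by
  rw [mem_union, snoc_mem_snocImage, mem_singleton, Fin.snoc_inj]

variable {c d : α}

theorem snocImage_union_singleton_injective (hdc : d ≠ c) :
    Function.Injective fun q : Finset (Fin n → α) × (Fin n → α) =>
      snocImage c q.1 ∪ {Fin.snoc q.2 d} := by
  rintro ⟨S, x⟩ ⟨S', x'⟩ h
  have hmem (v : Fin n → α) (a : α) := congrArg (Fin.snoc v a ∈ ·) h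
  simp only [snoc_mem_snocImage_union_singleton, eq_iff_iff] at hmem
  refine Prod.ext (ext fun v => ?_) ?_
  · simpa [hdc.symm] using hmem v c
  · simpa [hdc] using hmem x d

theorem snoc_notMem_snocImage (hdc : d ≠ c) (S : Finset (Fin n → α)) (x : Fin n → α) :
    Fin.snoc x d ∉ snocImage c S := by
  simp [snoc_mem_snocImage, hdc]

theorem card_snocImage_union_singleton (hdc : d ≠ c) (S : Finset (Fin n → α))
    (x : Fin n → α) : #(snocImage c S ∪ {Fin.snoc x d}) = #S + 1 := by
  rw [card_union_of_disjoint (disjoint_singleton_right.2 (snoc_notMem_snocImage hdc S x)),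
    card_snocImage, card_singleton]

variable [Fintype α]

def extendFamily (c d : α) (A : Finset (Finset (Fin n → α))) :
    Finset (Finset (Fin (n + 1) → α)) :=
  A.image (snocImage c) ∪ (A ×ˢ univ).image fun q => snocImage c q.1 ∪ {Fin.snoc q.2 d}

theorem sum_X_pow_card_extendFamily {R : Type*} [CommSemiring R] (hdc : d ≠ c)
    (A : Finset (Finset (Fin n → α))) :
    ∑ T ∈ extendFamily c d A, (X : R[X]) ^ #T =
      (1 + C ((Fintype.card α : R) ^ n) * X) * ∑ S ∈ A, (X : R[X]) ^ #S := by
  have hdisj : Disjoint (A.image (snocImage c))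
      ((A ×ˢ univ).image fun q => snocImage c q.1 ∪ {Fin.snoc q.2 d}) := by
    simp only [disjoint_left, mem_image, mem_product, mem_univ, and_true, Prod.exists]
    rintro _ ⟨S, -, rfl⟩ ⟨S', x, -, h⟩
    exact snoc_notMem_snocImage hdc S x (h ▸ mem_union_right _ (mem_singleton_self _))
  rw [extendFamily, sum_union hdisj,
    sum_image fun _ _ _ _ h => snocImage_injective c h,
    sum_image fun _ _ _ _ h => snocImage_union_singleton_injective hdc h, sum_product,
    add_mul, one_mul, mul_sum]
  simp only [card_snocImage, card_snocImage_union_singleton hdc, sum_const, card_univ,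
    Fintype.card_fun, Fintype.card_fin, nsmul_eq_mul]
  congr 1
  refine sum_congr rfl fun S _ => ?_
  simp only [map_pow, map_natCast, Nat.cast_pow]
  ring

end SnocImage

theorem toFinset_Fn_succ (p n : ℕ) [NeZero p] :
    (Set.toFinite (Fn p (n + 1))).toFinset =
      extendFamily 0 1 (Set.toFinite (Fn p n)).toFinset := by
  ext T
  simp [Fn, extendFamily, snocImage, eq_comm]

theorem sum_X_pow_card_Fn (p n : ℕ) [Fact (1 < p)] :
    ∑ S ∈ (Set.toFinite (Fn p n)).toFinset, (X : ℤ[X]) ^ #S =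
      ∏ i ∈ range n, (1 + C ((p : ℤ) ^ i) * X) := by
  induction n with
  | zero => simp [Fn]
  | succ n ih =>
    rw [toFinset_Fn_succ, sum_X_pow_card_extendFamily one_ne_zero, ih, ZMod.card,
      prod_range_succ, mul_comm]

theorem coeff_sum_X_pow_card {β R : Type*} [Semiring R] (B : Finset (Finset β)) (k : ℕ) :
    (∑ S ∈ B, (X : R[X]) ^ #S).coeff k = #{S ∈ B | #S = k} := by
  simp [coeff_X_pow, eq_comm]

theorem coeff_prod_one_add_C_mul_X {ι R : Type*} [CommSemiring R] (s : Finset ι) (f : ι → R)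
    (k : ℕ) :
    (∏ i ∈ s, (1 + C (f i) * X)).coeff k = ∑ T ∈ s.powersetCard k, ∏ i ∈ T, f i := by
  simp only [prod_one_add, prod_mul_distrib, prod_const, ← map_prod, finsetSum_coeff,
    coeff_C_mul_X_pow, powersetCard_eq_filter, sum_filter, eq_comm]

theorem stmt8_general (p n : ℕ) [Fact (Nat.Prime p)] :
    (∀ k ≤ n,
      (((Set.toFinite (Fn p n)).toFinset.filter fun S => S.card = k)).card =
        ∑ T ∈ (Finset.range n).powersetCard k, ∏ i ∈ T, p ^ i) ∧
    ∑ S ∈ (Set.toFinite (Fn p n)).toFinset, (Polynomial.X : Polynomial ℤ) ^ S.card =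
      ∏ i ∈ Finset.range n, (1 + Polynomial.C ((p : ℤ) ^ i) * Polynomial.X) := by
  refine ⟨fun k _ => ?_, sum_X_pow_card_Fn p n⟩
  have h := congrArg (coeff · k) (sum_X_pow_card_Fn p n)
  simp only [coeff_sum_X_pow_card, coeff_prod_one_add_C_mul_X] at h
  exact_mod_cast h

/-- For every `0 ≤ k ≤ n`, the number of sets `S ∈ F_n` with `|S| = k` equals the `k`-th
elementary symmetric polynomial evaluated at `(1, p, p², …, p^{n−1})`; equivalently,
`Σ_{S ∈ F_n} y^{|S|} = Π_{i=1}^{n} (1 + p^{i−1} y)` as polynomials in `y` with integer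
coefficients. -/
theorem stmt8 (p n : ℕ) [Fact (Nat.Prime p)] (hn : 1 ≤ n) :
    (∀ k ≤ n,
      (((Set.toFinite (Fn p n)).toFinset.filter fun S => S.card = k)).card =
        ∑ T ∈ (Finset.range n).powersetCard k, ∏ i ∈ T, p ^ i) ∧
    ∑ S ∈ (Set.toFinite (Fn p n)).toFinset, (Polynomial.X : Polynomial ℤ) ^ S.card =
      ∏ i ∈ Finset.range n, (1 + Polynomial.C ((p : ℤ) ^ i) * Polynomial.X) :=
  stmt8_general p n

end
end
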